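/- arXiv:1302.0721 — 5 statements merged into one kernel-verified Lean document; each statement's English description precedes it below -/
import Mathlib

section
/- Let k < t be coprime positive integers with t > 24, and let S_i be the i-strip of D(k,t) for some i ∈ {0, 1, …, t − 24}. Then there is an assignment of colors from the set C = {1, 2, …, 15, 22, 23} to the vertices of S_i such that any two distinct vertices of S_i receiving the same color c are at distance greater than c in S_i. -/
/-- The infinite distance graph `D(k,t)` on vertex set `ℤ`: distinct `i, j` are
adjacent iff `|i - j| ∈ {k, t}`. -/
def distGraph (k t : ℕ) : SimpleGraph ℤ where
  Adj i j := i ≠ j ∧ ((i - j).natAbs = k ∨ (i - j).natAbs = t)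
  symm := by
    constructor
    rintro i j ⟨hne, hd⟩
    refine ⟨hne.symm, ?_⟩
    rwa [show j - i = -(i - j) by ring, Int.natAbs_neg]
  loopless := by constructor; rintro i ⟨hne, -⟩; exact hne rfl

/-- `c` is a packing `p`-coloring of `G`: each vertex gets a color in `{1, …, p}`,
and any two distinct vertices with the same color `c` are at distance greater
than `c` (in particular, unreachable pairs have infinite distance). -/
def IsPackingColoring {V : Type*} (G : SimpleGraph V) (p : ℕ) (c : V → ℕ) : Prop :=
  (∀ v, 1 ≤ c v ∧ c v ≤ p) ∧
  ∀ u v : V, u ≠ v → c u = c v → (c u : ℕ∞) < G.edist u v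

/-- The packing chromatic number of `G`: the smallest `p` (as an element of `ℕ∞`,
being `⊤` if no finite packing coloring exists) admitting a packing `p`-coloring. -/
noncomputable def packingChromaticNumber {V : Type*} (G : SimpleGraph V) : ℕ∞ :=
  sInf {q : ℕ∞ | ∃ p : ℕ, q = p ∧ ∃ c : V → ℕ, IsPackingColoring G p c}

/-- The vertex set of the `i`-band of `D(k,t)`: the integers `i*k + j*t`, `j ∈ ℤ`. -/
def bandSet (k t : ℕ) (i : ℕ) : Set ℤ :=
  {z : ℤ | ∃ j : ℤ, z = (i : ℤ) * k + j * t}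

/-- The vertex set of the `i`-strip of `D(k,t)`: the union of the vertex sets of
the bands `B_i, B_{i+1}, …, B_{i+23}`. -/
def stripSet (k t : ℕ) (i : ℕ) : Set ℤ :=
  ⋃ m ∈ Finset.range 24, bandSet k t (i + m)

/-!
A vertex of `S_i` is uniquely of the form `(i + m) k + j t` with `0 ≤ m < 24` and `j ∈ ℤ`:
uniqueness holds because `gcd(k, t) = 1` and `t > 24`. For the same reason an edge of length `k`
changes `m` by one and keeps `j`, and an edge of length `t` changes `j` by one and keeps `m`.
So `(m, j)` is a graph homomorphism from `S_i` to the grid `ℤ □ ℤ`, distances in `S_i` are at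
least the ℓ¹-distances of the coordinates, and it suffices to packing-colour the 24 grid rows
`0 ≤ m < 24` with colours from `C`. An explicit colouring, `48`-periodic in `j`, is checked by
evaluation on one period.
-/

open SimpleGraph

namespace SimpleGraph

variable {V W : Type*} {G : SimpleGraph V} {H : SimpleGraph W}

theorem Hom.edist_le (f : G →g H) (u v : V) : H.edist (f u) (f v) ≤ G.edist u v := by
  by_cases huv : G.Reachable u v
  · obtain ⟨w, hw⟩ := huv.exists_walk_length_eq_edist
    rw [← hw, ← Walk.length_map f w]
    exact H.edist_le _
  · rw [edist_eq_top_of_not_reachable huv]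
    exact le_top

theorem Walk.natAbs_sub_le_length {a b : ℤ} (w : (hasse ℤ).Walk a b) :
    (a - b).natAbs ≤ w.length := by
  induction w with
  | nil => simp
  | cons hadj _ ih =>
    rw [Walk.length_cons]
    rcases hasse_adj.mp hadj with h | h <;> rw [Order.covBy_iff_add_one_eq] at h <;> omega

theorem natAbs_sub_le_edist_hasse_int (a b : ℤ) : ((a - b).natAbs : ℕ∞) ≤ (hasse ℤ).edist a b := by
  rw [edist_eq_sInf]
  exact le_sInf fun _ ⟨w, hw⟩ => hw ▸ Nat.cast_le.mpr w.natAbs_sub_le_length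

end SimpleGraph

theorem Nat.Coprime.eq_and_eq_of_mul_add_mul_eq {k t : ℕ} (hcop : Nat.Coprime k t)
    {a b a' b' : ℤ} (h : a * k + b * t = a' * k + b' * t) (ha : (a - a').natAbs < t) :
    a = a' ∧ b = b' := by
  have hdvd : (t : ℤ) ∣ (a - a') * k := ⟨b' - b, by linear_combination h⟩
  have haa : a - a' = 0 := Int.eq_zero_of_dvd_of_natAbs_lt_natAbs
    ((Nat.isCoprime_iff_coprime.mpr hcop.symm).dvd_of_dvd_mul_right hdvd) (by simpa using ha)
  have ht : (t : ℤ) ≠ 0 := by omega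
  refine ⟨by omega, mul_right_cancel₀ ht ?_⟩
  linear_combination h - k * haa

namespace stripSet

variable {k t i : ℕ}

theorem exists_coords {z : ℤ} (hz : z ∈ stripSet k t i) :
    ∃ p : ℤ × ℤ, (0 ≤ p.1 ∧ p.1 < 24) ∧ z = (i + p.1) * k + p.2 * t := by
  simp only [stripSet, bandSet, Set.mem_iUnion, Set.mem_ofPred_eq, Finset.mem_range] at hz
  obtain ⟨m, hm, j, rfl⟩ := hz
  exact ⟨(m, j), by omega, by push_cast; ring⟩

noncomputable def coords (v : stripSet k t i) : ℤ × ℤ := (exists_coords v.2).choose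

theorem coords_fst_mem (v : stripSet k t i) : 0 ≤ (coords v).1 ∧ (coords v).1 < 24 :=
  (exists_coords v.2).choose_spec.1

theorem coe_eq_coords (v : stripSet k t i) :
    (v : ℤ) = (i + (coords v).1) * k + (coords v).2 * t :=
  (exists_coords v.2).choose_spec.2

theorem coords_injective : Function.Injective (coords (k := k) (t := t) (i := i)) :=
  fun u v h => Subtype.ext <| by rw [coe_eq_coords u, coe_eq_coords v, h]

theorem coords_sub_eq (hcop : Nat.Coprime k t) (ht : 24 < t) {u v : stripSet k t i} {a b : ℤ}
    (ha : a.natAbs ≤ 1) (h : (u : ℤ) - v = a * k + b * t) :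
    (coords u).1 - (coords v).1 = a ∧ (coords u).2 - (coords v).2 = b := by
  have hu := coords_fst_mem u
  have hv := coords_fst_mem v
  have := hcop.eq_and_eq_of_mul_add_mul_eq
    (a := i + (coords u).1) (b := (coords u).2)
    (a' := i + (coords v).1 + a) (b' := (coords v).2 + b)
    (by linear_combination h - coe_eq_coords u + coe_eq_coords v) (by omega)
  omega

theorem coords_adj (hcop : Nat.Coprime k t) (ht : 24 < t) {u v : stripSet k t i}
    (huv : ((distGraph k t).induce (stripSet k t i)).Adj u v) :
    (hasse ℤ □ hasse ℤ).Adj (coords u) (coords v) := by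
  have hd : ((u : ℤ) - v).natAbs = k ∨ ((u : ℤ) - v).natAbs = t := huv.2
  simp only [boxProd_adj, hasse_adj, Order.covBy_iff_add_one_eq]
  rcases hd with hd | hd <;> rcases Int.natAbs_eq_iff.mp hd with h | h
  · have := coords_sub_eq (a := 1) (b := 0) hcop ht (by decide) (by rw [h]; ring)
    omega
  · have := coords_sub_eq (a := -1) (b := 0) hcop ht (by decide) (by rw [h]; ring)
    omega
  · have := coords_sub_eq (a := 0) (b := 1) hcop ht (by decide) (by rw [h]; ring)
    omega
  · have := coords_sub_eq (a := 0) (b := -1) hcop ht (by decide) (by rw [h]; ring)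
    omega

noncomputable def coordsHom (hcop : Nat.Coprime k t) (ht : 24 < t) :
    (distGraph k t).induce (stripSet k t i) →g hasse ℤ □ hasse ℤ :=
  ⟨coords, coords_adj hcop ht⟩

end stripSet

/-- Row `m`, column `s` is the colour of the grid point `(m, s)`; along each row the colouring
repeats with period `48`. -/
def coloringTable : List (List ℕ) := [
  [2, 1, 5, 1, 2, 1, 3, 1, 2, 1, 6, 1, 15, 1, 7, 1, 2, 1, 3, 1, 2, 1, 4, 1, 8, 1, 5, 1, 2, 1, 3, 1, 2, 1, 7, 1, 2, 1, 3, 1, 2, 1, 3, 1, 2, 1, 4, 1],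
  [1, 9, 2, 3, 1, 13, 1, 5, 1, 4, 1, 3, 1, 2, 1, 3, 1, 11, 1, 5, 1, 12, 1, 3, 1, 2, 1, 3, 1, 11, 1, 5, 1, 4, 1, 3, 1, 5, 1, 13, 1, 7, 1, 5, 1, 12, 1, 3],
  [23, 1, 4, 1, 6, 1, 2, 1, 3, 1, 2, 1, 5, 1, 4, 1, 10, 1, 2, 1, 3, 1, 2, 1, 7, 1, 4, 1, 6, 1, 2, 1, 3, 1, 2, 1, 6, 1, 4, 1, 10, 1, 2, 1, 3, 1, 2, 1],
  [1, 3, 1, 2, 1, 3, 1, 7, 1, 12, 1, 8, 1, 3, 1, 2, 1, 3, 1, 4, 1, 6, 1, 5, 1, 3, 1, 2, 1, 3, 1, 22, 1, 9, 1, 8, 1, 3, 1, 2, 1, 3, 1, 4, 1, 8, 1, 5],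
  [2, 1, 10, 1, 5, 1, 4, 1, 9, 1, 3, 1, 2, 1, 6, 1, 5, 1, 7, 1, 2, 1, 3, 1, 2, 1, 10, 1, 5, 1, 4, 1, 2, 1, 3, 1, 2, 1, 11, 1, 5, 1, 14, 1, 2, 1, 3, 1],
  [1, 7, 1, 3, 1, 2, 1, 3, 1, 5, 1, 4, 1, 14, 1, 3, 1, 2, 1, 3, 1, 9, 1, 4, 1, 15, 1, 3, 1, 2, 1, 3, 1, 5, 1, 4, 1, 7, 1, 3, 1, 2, 1, 3, 1, 6, 1, 4],
  [3, 1, 2, 1, 8, 1, 22, 1, 6, 1, 2, 1, 3, 1, 2, 1, 4, 1, 8, 1, 5, 1, 2, 1, 3, 1, 2, 1, 13, 1, 7, 1, 6, 1, 2, 1, 3, 1, 2, 1, 4, 1, 9, 1, 5, 1, 2, 1],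
  [1, 5, 1, 4, 1, 3, 1, 2, 1, 3, 1, 7, 1, 5, 1, 13, 1, 3, 1, 2, 1, 3, 1, 11, 1, 5, 1, 4, 1, 3, 1, 2, 1, 3, 1, 12, 1, 5, 1, 6, 1, 3, 1, 2, 1, 3, 1, 11],
  [2, 1, 3, 1, 2, 1, 5, 1, 4, 1, 11, 1, 2, 1, 3, 1, 2, 1, 6, 1, 4, 1, 7, 1, 2, 1, 3, 1, 2, 1, 5, 1, 4, 1, 10, 1, 2, 1, 3, 1, 2, 1, 7, 1, 4, 1, 13, 1],
  [1, 6, 1, 9, 1, 7, 1, 3, 1, 2, 1, 3, 1, 4, 1, 9, 1, 5, 1, 3, 1, 2, 1, 3, 1, 6, 1, 9, 1, 8, 1, 3, 1, 2, 1, 3, 1, 4, 1, 15, 1, 5, 1, 3, 1, 2, 1, 3],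
  [4, 1, 2, 1, 3, 1, 2, 1, 10, 1, 5, 1, 6, 1, 2, 1, 3, 1, 2, 1, 10, 1, 5, 1, 4, 1, 2, 1, 3, 1, 2, 1, 11, 1, 5, 1, 9, 1, 2, 1, 3, 1, 2, 1, 10, 1, 5, 1],
  [1, 3, 1, 5, 1, 4, 1, 15, 1, 3, 1, 2, 1, 3, 1, 7, 1, 4, 1, 23, 1, 3, 1, 2, 1, 3, 1, 5, 1, 4, 1, 14, 1, 3, 1, 2, 1, 3, 1, 8, 1, 4, 1, 6, 1, 3, 1, 2],
  [8, 1, 14, 1, 2, 1, 3, 1, 2, 1, 4, 1, 8, 1, 5, 1, 2, 1, 3, 1, 2, 1, 8, 1, 12, 1, 7, 1, 2, 1, 3, 1, 2, 1, 4, 1, 6, 1, 5, 1, 2, 1, 3, 1, 2, 1, 7, 1],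
  [1, 2, 1, 3, 1, 6, 1, 5, 1, 7, 1, 3, 1, 2, 1, 3, 1, 11, 1, 5, 1, 4, 1, 3, 1, 2, 1, 3, 1, 6, 1, 5, 1, 7, 1, 3, 1, 2, 1, 3, 1, 11, 1, 5, 1, 4, 1, 3],
  [5, 1, 4, 1, 11, 1, 2, 1, 3, 1, 2, 1, 12, 1, 4, 1, 6, 1, 2, 1, 3, 1, 2, 1, 5, 1, 4, 1, 10, 1, 2, 1, 3, 1, 2, 1, 13, 1, 4, 1, 7, 1, 2, 1, 3, 1, 2, 1],
  [1, 3, 1, 2, 1, 3, 1, 4, 1, 9, 1, 5, 1, 3, 1, 2, 1, 3, 1, 7, 1, 9, 1, 6, 1, 3, 1, 2, 1, 3, 1, 4, 1, 8, 1, 5, 1, 3, 1, 2, 1, 3, 1, 12, 1, 9, 1, 6],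
  [2, 1, 7, 1, 5, 1, 8, 1, 2, 1, 3, 1, 2, 1, 10, 1, 5, 1, 4, 1, 2, 1, 3, 1, 2, 1, 11, 1, 5, 1, 15, 1, 9, 1, 3, 1, 2, 1, 10, 1, 5, 1, 4, 1, 2, 1, 3, 1],
  [1, 10, 1, 3, 1, 2, 1, 3, 1, 6, 1, 4, 1, 7, 1, 3, 1, 2, 1, 3, 1, 5, 1, 4, 1, 13, 1, 3, 1, 2, 1, 3, 1, 2, 1, 4, 1, 23, 1, 3, 1, 2, 1, 3, 1, 5, 1, 4],
  [3, 1, 2, 1, 4, 1, 13, 1, 5, 1, 2, 1, 3, 1, 2, 1, 15, 1, 8, 1, 22, 1, 2, 1, 3, 1, 2, 1, 4, 1, 7, 1, 5, 1, 6, 1, 3, 1, 2, 1, 14, 1, 6, 1, 7, 1, 2, 1],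
  [1, 5, 1, 6, 1, 3, 1, 2, 1, 3, 1, 11, 1, 5, 1, 4, 1, 3, 1, 2, 1, 3, 1, 7, 1, 5, 1, 6, 1, 3, 1, 2, 1, 3, 1, 2, 1, 5, 1, 4, 1, 3, 1, 2, 1, 3, 1, 15],
  [2, 1, 3, 1, 2, 1, 7, 1, 4, 1, 14, 1, 2, 1, 3, 1, 2, 1, 5, 1, 6, 1, 10, 1, 2, 1, 3, 1, 2, 1, 12, 1, 4, 1, 11, 1, 7, 1, 3, 1, 9, 1, 5, 1, 4, 1, 11, 1],
  [1, 9, 1, 12, 1, 5, 1, 3, 1, 2, 1, 3, 1, 6, 1, 9, 1, 7, 1, 3, 1, 2, 1, 3, 1, 4, 1, 9, 1, 5, 1, 3, 1, 2, 1, 3, 1, 2, 1, 8, 1, 2, 1, 3, 1, 2, 1, 3],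
  [4, 2, 8, 1, 3, 1, 2, 1, 10, 1, 5, 1, 8, 1, 2, 1, 3, 1, 2, 1, 4, 1, 5, 1, 8, 1, 2, 1, 3, 1, 2, 1, 10, 1, 5, 1, 4, 1, 6, 1, 3, 1, 13, 1, 22, 1, 5, 1],
  [1, 3, 1, 2, 1, 4, 1, 6, 1, 3, 1, 2, 1, 4, 1, 5, 1, 13, 1, 12, 1, 3, 1, 2, 1, 3, 1, 7, 1, 4, 1, 6, 1, 3, 1, 2, 1, 3, 1, 2, 1, 4, 1, 2, 1, 3, 1, 2]]

def tableColor (m s : ℕ) : ℕ := (coloringTable.getD m []).getD s 0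

/-- No other cell within ℓ¹-distance `c` of `(m, s)` has colour `c`. The offsets `d - c`, `e - c`
are shifted by `c` to stay in `ℕ`, and columns are read mod `48`. -/
def TableIsolated (m s c : ℕ) : Prop :=
  ∀ d ≤ 2 * c, ∀ e ≤ 2 * c, Nat.dist d c + Nat.dist e c ≤ c ∧ c ≤ m + d ∧ m + d < 24 + c ∧
    tableColor (m + d - c) ((s + e + 48 - c) % 48) = c → d = c ∧ e = c

instance (m s c : ℕ) : Decidable (TableIsolated m s c) := by
  unfold TableIsolated; infer_instance

theorem tableColor_mem : ∀ m < 24, ∀ s < 48,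
    1 ≤ tableColor m s ∧ tableColor m s ≤ 15 ∨ tableColor m s = 22 ∨ tableColor m s = 23 := by
  decide +kernel

theorem tableColor_isolated : ∀ m < 24, ∀ s < 48, TableIsolated m s (tableColor m s) := by
  decide +kernel

def gridColor (p : ℤ × ℤ) : ℕ := tableColor p.1.toNat (p.2 % 48).toNat

theorem gridColor_mem {p : ℤ × ℤ} (hp : 0 ≤ p.1 ∧ p.1 < 24) :
    gridColor p ∈ ({1, 2, 3, 4, 5, 6, 7, 8, 9, 10, 11, 12, 13, 14, 15, 22, 23} : Set ℕ) := by
  have := tableColor_mem p.1.toNat (by omega) (p.2 % 48).toNat (by omega)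
  simp only [Set.mem_insert_iff, Set.mem_singleton_iff, gridColor]
  omega

theorem gridColor_lt_natAbs_add_natAbs {p q : ℤ × ℤ} (hp : 0 ≤ p.1 ∧ p.1 < 24)
    (hq : 0 ≤ q.1 ∧ q.1 < 24) (hpq : p ≠ q) (hc : gridColor p = gridColor q) :
    gridColor p < (p.1 - q.1).natAbs + (p.2 - q.2).natAbs := by
  by_contra! hle
  have hc_le : gridColor p ≤ 23 := by
    have := gridColor_mem hp
    simp only [Set.mem_insert_iff, Set.mem_singleton_iff] at this
    omega
  have hiso : TableIsolated _ _ (gridColor p) :=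
    tableColor_isolated p.1.toNat (by omega) (p.2 % 48).toNat (by omega)
  have hcq : tableColor (p.1.toNat + (q.1 - p.1 + gridColor p).toNat - gridColor p)
      (((p.2 % 48).toNat + (q.2 - p.2 + gridColor p).toNat + 48 - gridColor p) % 48) =
        gridColor p := by
    rw [hc]; congr 1 <;> omega
  obtain ⟨hd, he⟩ :=
    hiso _ (by omega) _ (by omega) ⟨by unfold Nat.dist; omega, by omega, by omega, hcq⟩
  exact hpq (Prod.ext (by omega) (by omega))

theorem gridColor_lt_edist {p q : ℤ × ℤ} (hp : 0 ≤ p.1 ∧ p.1 < 24) (hq : 0 ≤ q.1 ∧ q.1 < 24)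
    (hpq : p ≠ q) (hc : gridColor p = gridColor q) :
    (gridColor p : ℕ∞) < (hasse ℤ □ hasse ℤ).edist p q := by
  rw [edist_boxProd]
  calc (gridColor p : ℕ∞) < ((p.1 - q.1).natAbs + (p.2 - q.2).natAbs : ℕ) := by
        exact_mod_cast gridColor_lt_natAbs_add_natAbs hp hq hpq hc
    _ ≤ _ := by
        push_cast
        exact add_le_add (natAbs_sub_le_edist_hasse_int _ _) (natAbs_sub_le_edist_hasse_int _ _)

theorem strip_coloring_general (k t : ℕ) (hcop : Nat.gcd k t = 1)
    (ht : 24 < t) (i : ℕ) :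
    ∃ c : (stripSet k t i) → ℕ,
      (∀ v, c v ∈ ({1, 2, 3, 4, 5, 6, 7, 8, 9, 10, 11, 12, 13, 14, 15, 22, 23} : Set ℕ)) ∧
      ∀ u v : (stripSet k t i), u ≠ v → c u = c v →
        (c u : ℕ∞) < (SimpleGraph.induce (stripSet k t i) (distGraph k t)).edist u v := by
  refine ⟨fun v => gridColor (stripSet.coords v),
    fun v => gridColor_mem (stripSet.coords_fst_mem v), ?_⟩
  intro u v huv hc
  calc (gridColor (stripSet.coords u) : ℕ∞)
      < (hasse ℤ □ hasse ℤ).edist (stripSet.coords u) (stripSet.coords v) :=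
        gridColor_lt_edist (stripSet.coords_fst_mem u) (stripSet.coords_fst_mem v)
          (stripSet.coords_injective.ne huv) hc
    _ ≤ _ := (stripSet.coordsHom hcop ht).edist_le u v

theorem strip_coloring (k t : ℕ) (hk : 0 < k) (hkt : k < t) (hcop : Nat.gcd k t = 1)
    (ht : 24 < t) (i : ℕ) (hi : i ≤ t - 24) :
    ∃ c : (stripSet k t i) → ℕ,
      (∀ v, c v ∈ ({1, 2, 3, 4, 5, 6, 7, 8, 9, 10, 11, 12, 13, 14, 15, 22, 23} : Set ℕ)) ∧
      ∀ u v : (stripSet k t i), u ≠ v → c u = c v →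
        (c u : ℕ∞) < (SimpleGraph.induce (stripSet k t i) (distGraph k t)).edist u v :=
  strip_coloring_general k t hcop ht i
end

section
/- Let k < t be coprime positive integers with t ≥ 56, and let B_i and B_{i+25} be two bands of D(k,t) (with 0 ≤ i and i + 25 ≤ t − 1). Then there is an assignment of colors from the set C = {1, 16, 17, 18, 19, 20, 21, 24, 25, 26, 27, 28, 29, 30} to the vertices of B_i and B_{i+25} such that any two distinct vertices of B_i ∪ B_{i+25} receiving the same color c are at distance greater than c in D(k,t). -/
/-!
Since `gcd k t = 1`, a difference `s * k + m * t` with `|s| ≤ 25` has no other representation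
`a * k + b * t` with `|a| + |b| ≤ 30` once `t ≥ 56` (such an `a` satisfies `t ∣ a - s`), so for
the colours at stake the distance between `(i + σ₁) k + j₁ t` and `(i + σ₂) k + j₂ t` is at least
`|σ₁ - σ₂| + |j₁ - j₂|`. Hence it suffices to give vertex `(i + σ) k + j t`, `σ ∈ {0, 25}`, the
colour `f (σ + j)` of a packing colouring `f` of the integer line: by the triangle inequality two
vertices of the same colour are then far enough apart, except when `σ₁ + j₁ = σ₂ + j₂`, where their
distance is `50`. Such an `f` exists with period `122`: colour `1` on the even integers, and on the
odd ones a word of length `61` found by computer search.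
-/

open Function

namespace distGraph

variable {k t : ℕ} {u v : ℤ}

theorem exists_sub_eq_of_walk (w : (distGraph k t).Walk u v) :
    ∃ a b : ℤ, u - v = a * k + b * t ∧ a.natAbs + b.natAbs ≤ w.length := by
  induction w with
  | nil => exact ⟨0, 0, by ring, by simp⟩
  | @cons u x v hadj w ih =>
    obtain ⟨a, b, hab, hlen⟩ := ih
    rw [SimpleGraph.Walk.length_cons]
    rcases hadj.2 with hk | ht
    · rcases Int.natAbs_eq_iff.mp hk with h | h
      · exact ⟨a + 1, b, by linear_combination h + hab, by omega⟩
      · exact ⟨a - 1, b, by linear_combination h + hab, by omega⟩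
    · rcases Int.natAbs_eq_iff.mp ht with h | h
      · exact ⟨a, b + 1, by linear_combination h + hab, by omega⟩
      · exact ⟨a, b - 1, by linear_combination h + hab, by omega⟩

theorem le_edist_of_forall_le {n : ℕ}
    (h : ∀ a b : ℤ, u - v = a * k + b * t → n ≤ a.natAbs + b.natAbs) :
    (n : ℕ∞) ≤ (distGraph k t).edist u v := by
  by_cases hr : (distGraph k t).Reachable u v
  · obtain ⟨w, hw⟩ := hr.exists_walk_length_eq_edist
    obtain ⟨a, b, hab, hlen⟩ := exists_sub_eq_of_walk w
    rw [← hw]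
    exact_mod_cast (h a b hab).trans hlen
  · simp [SimpleGraph.edist_eq_top_of_not_reachable hr]

theorem lt_edist (hcop : Nat.gcd k t = 1) {s m : ℤ} {n : ℕ} (huv : u - v = s * k + m * t)
    (hn : n < s.natAbs + m.natAbs) (hnt : n + s.natAbs < t) :
    (n : ℕ∞) < (distGraph k t).edist u v := by
  refine lt_of_lt_of_le (by exact_mod_cast n.lt_succ_self) (le_edist_of_forall_le ?_)
  intro a b hab
  by_cases has : a = s
  · subst has
    have ht : (t : ℤ) ≠ 0 := by omega
    have hbm : b = m := mul_right_cancel₀ ht (by linear_combination hab.symm.trans huv)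
    omega
  · have hdvd : (t : ℤ) ∣ (a - s) * k := ⟨m - b, by linear_combination huv - hab⟩
    have hta : t ≤ (a - s).natAbs :=
      Int.natAbs_le_of_dvd_ne_zero
        ((Nat.isCoprime_iff_coprime.mpr (Nat.coprime_comm.mp hcop)).dvd_of_dvd_mul_right hdvd)
        (sub_ne_zero.mpr has)
    omega

end distGraph

theorem Function.Periodic.lt_natAbs_sub {f : ℤ → ℕ} {P : ℕ} (hf : Periodic f P) (hP : 0 < P)
    (hsep : ∀ n : ℕ, n < P → ∀ d : ℕ, d ≤ f n → 0 < d → f (n + d) ≠ f n)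
    {x y : ℤ} (hxy : x ≠ y) (h : f x = f y) : f x < (x - y).natAbs := by
  wlog hlt : x < y generalizing x y
  · rw [← Int.natAbs_neg, neg_sub, h]
    exact this hxy.symm h.symm (by omega)
  have hxP := Int.emod_lt_of_pos x (by omega : (0 : ℤ) < P)
  have hxP' := Int.emod_nonneg x (by omega : (P : ℤ) ≠ 0)
  set n := (x % P).toNat
  have hshift (e : ℤ) : f (x + e) = f (n + e) := by
    have hx : x = n + x / P * P := by
      have := Int.emod_add_ediv_mul x P
      omega
    rw [hx, add_right_comm]
    exact hf.int_mul (x / P) _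
  have hn : f n = f x := by simpa using (hshift 0).symm
  have hy : f (n + (y - x).toNat) = f y := by
    rw [← hshift, Int.toNat_of_nonneg (by omega), add_sub_cancel]
  by_contra! hle
  exact hsep n (by omega) (y - x).toNat (by omega) (by omega) (by rw [hy, hn, h])

def cyclicWord : List ℕ :=
  [30, 28, 29, 20, 16, 26, 17, 27, 24, 18, 19, 25, 21, 16, 20, 17, 30, 28, 29, 18, 19, 26, 16,
    27, 21, 24, 25, 17, 20, 18, 19, 16, 28, 29, 30, 21, 17, 26, 27, 18, 19, 24, 20, 25, 16, 17, 21,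
    28, 29, 18, 19, 26, 27, 20, 24, 16, 25, 21, 17, 18, 19]

def bandColor (j : ℤ) : ℕ :=
  (cyclicWord.flatMap fun c => [1, c]).getD (j % 122).toNat 1

theorem bandColor_periodic : Periodic bandColor 122 := fun j => by
  simp [bandColor]

theorem bandColor_lt_natAbs_sub {x y : ℤ} (hxy : x ≠ y) (h : bandColor x = bandColor y) :
    bandColor x < (x - y).natAbs :=
  bandColor_periodic.lt_natAbs_sub (by norm_num) (by decide) hxy h

theorem bandColor_mem (j : ℤ) :
    bandColor j ∈ ({1, 16, 17, 18, 19, 20, 21, 24, 25, 26, 27, 28, 29, 30} : Set ℕ) := by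
  have hword : ∀ c ∈ cyclicWord, c ∈ [16, 17, 18, 19, 20, 21, 24, 25, 26, 27, 28, 29, 30] := by
    decide
  rw [bandColor, List.getD_eq_getElem?_getD]
  rcases h : (cyclicWord.flatMap fun c => [1, c])[(j % 122).toNat]? with _ | c
  · simp
  · obtain ⟨a, ha, hc⟩ := List.mem_flatMap.mp (List.mem_of_getElem? h)
    have := hword a ha
    simp only [List.mem_cons, List.not_mem_nil, or_false] at hc this
    simp only [Option.getD_some, Set.mem_insert_iff, Set.mem_singleton_iff]
    omega

theorem bandColor_le_thirty (j : ℤ) : bandColor j ≤ 30 := by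
  have := bandColor_mem j
  simp only [Set.mem_insert_iff, Set.mem_singleton_iff] at this
  omega

def twoBandColoring (k t i : ℕ) (z : ℤ) : ℕ :=
  if (t : ℤ) ∣ z - i * k then bandColor ((z - i * k) / t)
  else bandColor (25 + (z - (i + 25) * k) / t)

theorem exists_of_mem_bandSet_union {k t i : ℕ} {z : ℤ}
    (hz : z ∈ bandSet k t i ∪ bandSet k t (i + 25)) :
    ∃ σ : ℤ, (σ = 0 ∨ σ = 25) ∧ ∃ j : ℤ, z = (i + σ) * k + j * t := by
  rcases hz with ⟨j, rfl⟩ | ⟨j, rfl⟩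
  · exact ⟨0, .inl rfl, j, by ring⟩
  · exact ⟨25, .inr rfl, j, by push_cast; ring⟩

theorem twoBandColoring_apply {k t i : ℕ} (hcop : Nat.gcd k t = 1) (ht : 25 < t) {σ : ℤ}
    (hσ : σ = 0 ∨ σ = 25) (j : ℤ) :
    twoBandColoring k t i ((i + σ) * k + j * t) = bandColor (σ + j) := by
  have ht0 : (t : ℤ) ≠ 0 := by omega
  rcases hσ with rfl | rfl
  · rw [twoBandColoring, if_pos ⟨j, by ring⟩, show (i + 0) * k + j * t - i * k = j * t by ring,
      Int.mul_ediv_cancel _ ht0, zero_add]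
  · have hndvd : ¬ (t : ℤ) ∣ (i + 25) * k + j * t - i * k := by
      intro h
      have h25k : (t : ℤ) ∣ 25 * k := by
        simpa [show (i + 25) * k + j * t - i * k = 25 * k + j * t by ring] using h
      have h25 := (Nat.isCoprime_iff_coprime.mpr (Nat.coprime_comm.mp hcop)).dvd_of_dvd_mul_right
        h25k
      have := Int.le_of_dvd (by norm_num) h25
      omega
    rw [twoBandColoring, if_neg hndvd, show (i + 25) * k + j * t - (i + 25) * k = j * t by ring,
      Int.mul_ediv_cancel _ ht0]

theorem bandColor_lt_edist {k t i : ℕ} (hcop : Nat.gcd k t = 1) (ht : 56 ≤ t) {σ₁ σ₂ j₁ j₂ : ℤ}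
    (hσ₁ : σ₁ = 0 ∨ σ₁ = 25) (hσ₂ : σ₂ = 0 ∨ σ₂ = 25)
    (hne : (i + σ₁) * k + j₁ * t ≠ (i + σ₂) * k + j₂ * t)
    (h : bandColor (σ₁ + j₁) = bandColor (σ₂ + j₂)) :
    (bandColor (σ₁ + j₁) : ℕ∞) <
      (distGraph k t).edist ((i + σ₁) * k + j₁ * t) ((i + σ₂) * k + j₂ * t) := by
  have hle := bandColor_le_thirty (σ₁ + j₁)
  refine distGraph.lt_edist hcop (s := σ₁ - σ₂) (m := j₁ - j₂) (by ring) ?_ (by omega)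
  by_cases heq : σ₁ + j₁ = σ₂ + j₂
  · have hσ : σ₁ ≠ σ₂ := by
      rintro rfl
      exact hne (by rw [add_left_cancel heq])
    omega
  · have := bandColor_lt_natAbs_sub heq h
    omega

theorem two_bands_coloring_general (k t : ℕ) (hcop : Nat.gcd k t = 1)
    (ht : 56 ≤ t) (i : ℕ) :
    ∃ c : ℤ → ℕ,
      (∀ v ∈ bandSet k t i ∪ bandSet k t (i + 25),
        c v ∈ ({1, 16, 17, 18, 19, 20, 21, 24, 25, 26, 27, 28, 29, 30} : Set ℕ)) ∧
      ∀ u ∈ bandSet k t i ∪ bandSet k t (i + 25),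
        ∀ v ∈ bandSet k t i ∪ bandSet k t (i + 25),
          u ≠ v → c u = c v → (c u : ℕ∞) < (distGraph k t).edist u v := by
  refine ⟨twoBandColoring k t i, fun z hz => ?_, fun u hu v hv huv hc => ?_⟩
  · obtain ⟨σ, hσ, j, rfl⟩ := exists_of_mem_bandSet_union hz
    rw [twoBandColoring_apply hcop (by omega) hσ]
    exact bandColor_mem _
  · obtain ⟨σ₁, hσ₁, j₁, rfl⟩ := exists_of_mem_bandSet_union hu
    obtain ⟨σ₂, hσ₂, j₂, rfl⟩ := exists_of_mem_bandSet_union hv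
    have ht25 : 25 < t := by omega
    rw [twoBandColoring_apply hcop ht25 hσ₁, twoBandColoring_apply hcop ht25 hσ₂] at hc
    rw [twoBandColoring_apply hcop ht25 hσ₁]
    exact bandColor_lt_edist hcop ht hσ₁ hσ₂ huv hc

theorem two_bands_coloring (k t : ℕ) (hk : 0 < k) (hkt : k < t) (hcop : Nat.gcd k t = 1)
    (ht : 56 ≤ t) (i : ℕ) (hi : i + 25 ≤ t - 1) :
    ∃ c : ℤ → ℕ,
      (∀ v ∈ bandSet k t i ∪ bandSet k t (i + 25),
        c v ∈ ({1, 16, 17, 18, 19, 20, 21, 24, 25, 26, 27, 28, 29, 30} : Set ℕ)) ∧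
      ∀ u ∈ bandSet k t i ∪ bandSet k t (i + 25),
        ∀ v ∈ bandSet k t i ∪ bandSet k t (i + 25),
          u ≠ v → c u = c v → (c u : ℕ∞) < (distGraph k t).edist u v :=
  two_bands_coloring_general k t hcop ht i
end

section
/- The packing chromatic number of the distance graph D(2,5) is at least 14. -/
/-!
Colours `1` and `2` together occupy at most about `4/7` of any interval. The colour-`1` class
avoids the differences `2, 5` and the colour-`2` class avoids `2, 3, 4, 5, 7, 10`, so scanning an
interval from left to right is a run of the finite automaton that remembers which of the last `5`
positions have colour `1` and which of the last `10` have colour `2`. A potential on its `321`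
reachable states that grows by at least `7 * [colour ∈ {1, 2}] - 4` per step gives
`7 * #{colours 1, 2 in [0, N)} ≤ 4 * N + 15`. A class of colour `k ≥ 3` has gaps at least
`5 * k - 4`, because every `d` with `|d| ≤ 5 * k - 5` is `5 * x + 2 * y` with `|x| + |y| ≤ k`.
With colours up to `13` only, `[0, 462)` would then hold at most `266 + 189 = 455` vertices.
-/

open Finset

section DistanceBounds

variable {k t : ℕ}

lemma distGraph_adj_add {u s : ℤ} (hs : s ≠ 0) (h : s.natAbs = k ∨ s.natAbs = t) :
    (distGraph k t).Adj u (u + s) :=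
  ⟨by omega, by rwa [show u - (u + s) = -s by ring, Int.natAbs_neg]⟩

lemma distGraph_edist_add_mul_natCast_le {u s : ℤ} (hs : s ≠ 0)
    (h : s.natAbs = k ∨ s.natAbs = t) (m : ℕ) : (distGraph k t).edist u (u + s * m) ≤ m := by
  induction m with
  | zero => simp
  | succ m ih =>
    have hstep : (distGraph k t).edist (u + s * m) (u + s * m + s) ≤ 1 :=
      SimpleGraph.edist_le_one_iff_adj_or_eq.2 (.inl (distGraph_adj_add hs h))
    calc (distGraph k t).edist u (u + s * ↑(m + 1))
        ≤ (distGraph k t).edist u (u + s * m) +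
            (distGraph k t).edist (u + s * m) (u + s * m + s) := by
          rw [Nat.cast_succ, mul_add_one, ← add_assoc]; exact SimpleGraph.edist_triangle
      _ ≤ m + 1 := add_le_add ih hstep
      _ = ↑(m + 1) := by norm_cast

lemma distGraph_edist_add_mul_le {u s : ℤ} (hs : s ≠ 0) (h : s.natAbs = k ∨ s.natAbs = t)
    (n : ℤ) : (distGraph k t).edist u (u + s * n) ≤ n.natAbs := by
  rcases Int.natAbs_eq n with hn | hn <;> rw [hn]
  · rw [Int.natAbs_natCast]
    exact distGraph_edist_add_mul_natCast_le hs h _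
  · rw [mul_neg, ← neg_mul, Int.natAbs_neg, Int.natAbs_natCast]
    exact distGraph_edist_add_mul_natCast_le (neg_ne_zero.2 hs) (by rwa [Int.natAbs_neg]) _

lemma distGraph_edist_le (hk : 0 < k) (ht : 0 < t) {u v x y : ℤ} (h : v = u + t * x + k * y) :
    (distGraph k t).edist u v ≤ x.natAbs + y.natAbs := by
  subst h
  calc (distGraph k t).edist u (u + t * x + k * y)
      ≤ (distGraph k t).edist u (u + t * x) +
          (distGraph k t).edist (u + t * x) (u + t * x + k * y) :=
        SimpleGraph.edist_triangle
    _ ≤ x.natAbs + y.natAbs := by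
        gcongr
        · exact distGraph_edist_add_mul_le (by omega) (.inr (by simp)) x
        · exact distGraph_edist_add_mul_le (by omega) (.inl (by simp)) y

end DistanceBounds

lemma exists_eq_five_mul_add_two_mul {k : ℕ} (hk : 3 ≤ k) {d : ℤ} (h0 : 0 ≤ d)
    (hd : d ≤ 5 * k - 5) : ∃ x y : ℤ, d = 5 * x + 2 * y ∧ x.natAbs + y.natAbs ≤ k := by
  rcases (by omega : d % 5 = 0 ∨ d = 1 ∨ (d % 5 = 1 ∧ 5 ≤ d) ∨ d % 5 = 2 ∨ d % 5 = 3 ∨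
    d % 5 = 4) with h | h | h | h | h | h
  · exact ⟨d / 5, 0, by omega, by omega⟩
  · exact ⟨1, -2, by omega, by omega⟩
  · exact ⟨d / 5 - 1, 3, by omega, by omega⟩
  · exact ⟨d / 5, 1, by omega, by omega⟩
  · exact ⟨d / 5 + 1, -1, by omega, by omega⟩
  · exact ⟨d / 5, 2, by omega, by omega⟩

lemma distGraph_two_five_edist_le {k : ℕ} (hk : 3 ≤ k) {u v : ℤ}
    (h : (v - u).natAbs ≤ 5 * k - 5) : (distGraph 2 5).edist u v ≤ k := by
  wlog huv : u ≤ v generalizing u v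
  · rw [SimpleGraph.edist_comm]
    exact this (by omega) (by omega)
  obtain ⟨x, y, hxy, hle⟩ :=
    exists_eq_five_mul_add_two_mul hk (d := v - u) (by omega) (by omega)
  exact (distGraph_edist_le (x := x) (y := y) (by norm_num) (by norm_num) (by push_cast; linarith)
    ).trans (by exact_mod_cast hle)

lemma distGraph_two_five_edist_add_le_two {d : ℕ} (hd : d ∈ [2, 3, 4, 5, 7, 10]) (u : ℤ) :
    (distGraph 2 5).edist u (u + d) ≤ 2 := by
  have key : ∀ x y : ℤ, x.natAbs + y.natAbs ≤ 2 → (d : ℤ) = 5 * x + 2 * y →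
      (distGraph 2 5).edist u (u + d) ≤ 2 := fun x y hxy hdxy ↦
    (distGraph_edist_le (x := x) (y := y) (by norm_num) (by norm_num) (by rw [hdxy]; ring)).trans
      (by exact_mod_cast hxy)
  simp only [List.mem_cons, List.not_mem_nil, or_false] at hd
  rcases hd with rfl | rfl | rfl | rfl | rfl | rfl
  · exact key 0 1 (by decide) (by norm_num)
  · exact key 1 (-1) (by decide) (by norm_num)
  · exact key 0 2 (by decide) (by norm_num)
  · exact key 1 0 (by decide) (by norm_num)
  · exact key 1 1 (by decide) (by norm_num)
  · exact key 2 0 (by decide) (by norm_num)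

lemma IsPackingColoring.eq_of_edist_le {V : Type*} {G : SimpleGraph V} {p : ℕ} {c : V → ℕ}
    (hc : IsPackingColoring G p c) {u v : V} (huv : c u = c v) (h : G.edist u v ≤ c u) :
    u = v := by
  by_contra hne
  exact (hc.2 u v hne huv).not_ge h

def AvoidsDistances (a : ℕ → ℕ) (i : ℕ) (D : List ℕ) : Prop :=
  ∀ m, ∀ d ∈ D, a m = i → a (m + d) ≠ i

lemma IsPackingColoring.avoidsDistances {G : SimpleGraph ℤ} {p : ℕ} {c : ℤ → ℕ}
    (hc : IsPackingColoring G p c) {i : ℕ} {D : List ℕ}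
    (hD : ∀ d ∈ D, 0 < d ∧ ∀ u : ℤ, G.edist u (u + d) ≤ i) :
    AvoidsDistances (fun n : ℕ ↦ c n) i D := by
  intro m d hd (hm : c m = i) (hmd : c ((m + d : ℕ) : ℤ) = i)
  push_cast at hmd
  have := hc.eq_of_edist_le (u := m) (v := m + d) (hm.trans hmd.symm)
    (by rw [hm]; exact (hD d hd).2 m)
  have := (hD d hd).1
  omega

lemma card_filter_eq_le_of_avoidsDistances {a : ℕ → ℕ} {i g : ℕ}
    (h : AvoidsDistances a i (List.range' 1 g)) (N : ℕ) :
    #{n ∈ range N | a n = i} ≤ (N + g) / (g + 1) := by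
  have hg : 0 < g + 1 := by omega
  have hsep : ∀ x y, a x = i → a y = i → x < y → g + 1 ≤ y - x := fun x y hx hy hxy ↦ by
    by_contra hlt
    exact h x (y - x) (List.mem_range'_1.2 (by omega)) hx (by rwa [Nat.add_sub_cancel' hxy.le])
  have hmaps :
      Set.MapsTo (· / (g + 1)) ↑{n ∈ range N | a n = i} ↑(range ((N + g) / (g + 1))) := by
    intro n hn
    simp only [coe_filter, mem_range, coe_range, Set.mem_Iio] at hn ⊢
    calc n / (g + 1) < (n + (g + 1)) / (g + 1) := by rw [Nat.add_div_right _ hg]; omega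
      _ ≤ (N + g) / (g + 1) := Nat.div_le_div_right (by grind)
  have hinj : Set.InjOn (· / (g + 1)) ↑{n ∈ range N | a n = i} := by
    intro m hm n hn (hmn : m / (g + 1) = n / (g + 1))
    simp only [coe_filter, mem_range] at hm hn
    have hm' := Nat.div_add_mod m (g + 1)
    have hn' := Nat.div_add_mod n (g + 1)
    rw [hmn] at hm'
    have := Nat.mod_lt m hg
    have := Nat.mod_lt n hg
    rcases lt_trichotomy m n with hlt | heq | hlt
    · have := hsep m n hm.2 hn.2 hlt; omega
    · exact heq
    · have := hsep n m hn.2 hm.2 hlt; omega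
  simpa using card_le_card_of_injOn _ hmaps hinj

def recentMask (a : ℕ → ℕ) (i L : ℕ) : ℕ → ℕ
  | 0 => 0
  | n + 1 => Nat.bit (a n == i) (recentMask a i L n) % 2 ^ L

lemma testBit_recentMask {a : ℕ → ℕ} {i L n j : ℕ} :
    (recentMask a i L n).testBit j ↔ j < L ∧ j < n ∧ a (n - 1 - j) = i := by
  induction n generalizing j with
  | zero => simp [recentMask]
  | succ n ih =>
    rw [recentMask, Nat.testBit_mod_two_pow]
    cases j with
    | zero => simp
    | succ j =>
      rw [Nat.testBit_bit_succ, Bool.and_eq_true, decide_eq_true_iff, ih,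
        show n + 1 - 1 - (j + 1) = n - 1 - j by omega]
      omega

lemma not_testBit_recentMask {a : ℕ → ℕ} {i L n d : ℕ} {D : List ℕ}
    (hA : AvoidsDistances a i D) (hd : d ∈ D) (hd0 : 0 < d) (hn : a n = i) :
    ¬ (recentMask a i L n).testBit (d - 1) := by
  rw [testBit_recentMask]
  rintro ⟨-, hdn, hprev⟩
  exact hA (n - 1 - (d - 1)) d hd hprev (by rwa [show n - 1 - (d - 1) + d = n by omega])

namespace OneTwoAutomaton

def step (s : ℕ × ℕ) (i : ℕ) : ℕ × ℕ :=
  (Nat.bit (i == 1) s.1 % 2 ^ 5, Nat.bit (i == 2) s.2 % 2 ^ 10)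

def state (a : ℕ → ℕ) (n : ℕ) : ℕ × ℕ :=
  (recentMask a 1 5 n, recentMask a 2 10 n)

lemma state_succ (a : ℕ → ℕ) (n : ℕ) : state a (n + 1) = step (state a n) (a n) := rfl

def Admissible (s : ℕ × ℕ) (i : ℕ) : Prop :=
  (i = 1 → ∀ d ∈ [2, 5], ¬ s.1.testBit (d - 1)) ∧
    (i = 2 → ∀ d ∈ [2, 3, 4, 5, 7, 10], ¬ s.2.testBit (d - 1))

instance (s : ℕ × ℕ) (i : ℕ) : Decidable (Admissible s i) :=
  inferInstanceAs (Decidable (_ ∧ _))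

lemma admissible_state {a : ℕ → ℕ} (h1 : AvoidsDistances a 1 [2, 5])
    (h2 : AvoidsDistances a 2 [2, 3, 4, 5, 7, 10]) (n : ℕ) : Admissible (state a n) (a n) :=
  ⟨fun hn _ hd ↦ not_testBit_recentMask h1 hd (by simp at hd; omega) hn,
    fun hn _ hd ↦ not_testBit_recentMask h2 hd (by simp at hd; omega) hn⟩

/-- The states reachable from `(0, 0)`, each paired with the largest value of
`7 * #{steps reading colour 1 or 2} - 4 * #{steps}` over the admissible runs ending there, the
empty run included (longest paths, computed offline). -/
def certificate : List ((ℕ × ℕ) × ℕ) := [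
  ((0, 0), 0), ((0, 1), 3), ((0, 2), 0), ((0, 3), 6), ((0, 4), 0), ((0, 6), 2), ((0, 8), 0),
  ((0, 12), 2), ((0, 16), 0), ((0, 24), 0), ((0, 32), 0), ((0, 48), 0), ((0, 64), 0), ((0, 65), 3),
  ((0, 96), 0), ((0, 128), 0), ((0, 130), 0), ((0, 192), 0), ((0, 256), 0), ((0, 257), 3),
  ((0, 260), 0), ((0, 384), 0), ((0, 512), 0), ((0, 513), 3), ((0, 514), 0), ((0, 515), 6),
  ((0, 520), 0), ((0, 768), 0), ((0, 769), 3), ((1, 0), 3), ((1, 2), 6), ((1, 4), 3), ((1, 6), 9),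
  ((1, 8), 3), ((1, 12), 5), ((1, 16), 3), ((1, 24), 5), ((1, 32), 3), ((1, 48), 3), ((1, 64), 3),
  ((1, 96), 3), ((1, 128), 3), ((1, 130), 6), ((1, 192), 3), ((1, 256), 3), ((1, 260), 3),
  ((1, 384), 3), ((1, 512), 3), ((1, 514), 6), ((1, 520), 3), ((1, 768), 3), ((2, 0), 0),
  ((2, 1), 6), ((2, 4), 4), ((2, 8), 0), ((2, 12), 6), ((2, 16), 0), ((2, 24), 4), ((2, 32), 0),
  ((2, 48), 1), ((2, 64), 0), ((2, 65), 6), ((2, 96), 0), ((2, 128), 0), ((2, 192), 2),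
  ((2, 256), 0), ((2, 257), 6), ((2, 260), 2), ((2, 384), 0), ((2, 512), 0), ((2, 513), 6),
  ((2, 520), 0), ((2, 768), 0), ((2, 769), 6), ((3, 0), 6), ((3, 4), 9), ((3, 8), 6),
  ((3, 12), 12), ((3, 16), 6), ((3, 24), 8), ((3, 32), 6), ((3, 48), 8), ((3, 64), 6),
  ((3, 96), 6), ((3, 128), 6), ((3, 192), 6), ((3, 256), 6), ((3, 260), 9), ((3, 384), 6),
  ((3, 512), 6), ((3, 520), 6), ((3, 768), 6), ((4, 0), 0), ((4, 1), 3), ((4, 2), 2), ((4, 3), 9),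
  ((4, 8), 2), ((4, 16), 2), ((4, 24), 7), ((4, 32), 0), ((4, 48), 0), ((4, 64), 0), ((4, 65), 4),
  ((4, 96), 0), ((4, 128), 0), ((4, 130), 4), ((4, 192), 2), ((4, 256), 0), ((4, 257), 4),
  ((4, 384), 2), ((4, 512), 0), ((4, 513), 3), ((4, 514), 4), ((4, 515), 9), ((4, 520), 0),
  ((4, 768), 0), ((4, 769), 3), ((6, 0), 4), ((6, 1), 9), ((6, 8), 6), ((6, 16), 6), ((6, 24), 11),
  ((6, 32), 2), ((6, 48), 4), ((6, 64), 4), ((6, 65), 11), ((6, 96), 4), ((6, 128), 4),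
  ((6, 192), 9), ((6, 256), 2), ((6, 257), 9), ((6, 384), 2), ((6, 512), 4), ((6, 513), 9),
  ((6, 520), 6), ((6, 768), 2), ((6, 769), 9), ((8, 0), 0), ((8, 1), 3), ((8, 2), 0), ((8, 3), 6),
  ((8, 4), 0), ((8, 6), 5), ((8, 16), 0), ((8, 32), 0), ((8, 48), 3), ((8, 64), 0), ((8, 65), 3),
  ((8, 96), 0), ((8, 128), 0), ((8, 130), 0), ((8, 192), 0), ((8, 256), 0), ((8, 257), 3),
  ((8, 260), 0), ((8, 384), 0), ((8, 512), 0), ((8, 513), 3), ((8, 514), 0), ((8, 515), 7),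
  ((8, 768), 0), ((8, 769), 5), ((9, 0), 3), ((9, 2), 6), ((9, 4), 7), ((9, 6), 12), ((9, 16), 5),
  ((9, 32), 5), ((9, 48), 10), ((9, 64), 3), ((9, 96), 3), ((9, 128), 3), ((9, 130), 7),
  ((9, 192), 3), ((9, 256), 3), ((9, 260), 7), ((9, 384), 5), ((9, 512), 3), ((9, 514), 7),
  ((9, 768), 5), ((12, 0), 0), ((12, 1), 7), ((12, 2), 5), ((12, 3), 12), ((12, 16), 2),
  ((12, 32), 2), ((12, 48), 7), ((12, 64), 0), ((12, 65), 5), ((12, 96), 0), ((12, 128), 0),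
  ((12, 130), 7), ((12, 192), 0), ((12, 256), 0), ((12, 257), 7), ((12, 384), 5), ((12, 512), 0),
  ((12, 513), 5), ((12, 514), 5), ((12, 515), 12), ((12, 768), 0), ((12, 769), 5), ((16, 0), 0),
  ((16, 1), 3), ((16, 2), 0), ((16, 3), 6), ((16, 4), 0), ((16, 6), 6), ((16, 8), 0),
  ((16, 12), 4), ((16, 32), 0), ((16, 64), 0), ((16, 65), 3), ((16, 96), 0), ((16, 128), 0),
  ((16, 130), 1), ((16, 192), 0), ((16, 256), 0), ((16, 257), 3), ((16, 260), 0), ((16, 384), 0),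
  ((16, 512), 0), ((16, 513), 3), ((16, 514), 4), ((16, 515), 6), ((16, 520), 0), ((16, 768), 0),
  ((16, 769), 3), ((17, 0), 3), ((17, 2), 6), ((17, 4), 3), ((17, 6), 10), ((17, 8), 3),
  ((17, 12), 8), ((17, 32), 3), ((17, 64), 3), ((17, 96), 6), ((17, 128), 3), ((17, 130), 6),
  ((17, 192), 3), ((17, 256), 3), ((17, 260), 3), ((17, 384), 3), ((17, 512), 3), ((17, 514), 8),
  ((17, 520), 3), ((17, 768), 3), ((18, 0), 0), ((18, 1), 6), ((18, 4), 6), ((18, 8), 4),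
  ((18, 12), 11), ((18, 32), 1), ((18, 64), 1), ((18, 65), 8), ((18, 96), 6), ((18, 128), 1),
  ((18, 192), 6), ((18, 256), 0), ((18, 257), 6), ((18, 260), 4), ((18, 384), 0), ((18, 512), 4),
  ((18, 513), 6), ((18, 520), 6), ((18, 768), 1), ((18, 769), 8), ((19, 0), 6), ((19, 4), 10),
  ((19, 8), 10), ((19, 12), 15), ((19, 32), 8), ((19, 64), 8), ((19, 96), 13), ((19, 128), 6),
  ((19, 192), 6), ((19, 256), 6), ((19, 260), 10), ((19, 384), 6), ((19, 512), 8), ((19, 520), 10),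
  ((19, 768), 8), ((24, 0), 0), ((24, 1), 3), ((24, 2), 3), ((24, 3), 10), ((24, 4), 1),
  ((24, 6), 8), ((24, 32), 0), ((24, 64), 0), ((24, 65), 5), ((24, 96), 3), ((24, 128), 0),
  ((24, 130), 1), ((24, 192), 0), ((24, 256), 0), ((24, 257), 3), ((24, 260), 3), ((24, 384), 0),
  ((24, 512), 0), ((24, 513), 3), ((24, 514), 3), ((24, 515), 10), ((24, 768), 1), ((24, 769), 8),
  ((25, 0), 3), ((25, 2), 10), ((25, 4), 8), ((25, 6), 15), ((25, 32), 5), ((25, 64), 5),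
  ((25, 96), 10), ((25, 128), 3), ((25, 130), 8), ((25, 192), 3), ((25, 256), 3), ((25, 260), 10),
  ((25, 384), 3), ((25, 512), 3), ((25, 514), 10), ((25, 768), 8)]

theorem certificate_spec : ∀ e ∈ certificate, e.2 ≤ 15 ∧
    ∀ i ∈ [0, 1, 2], Admissible e.1 i → ∃ e' ∈ certificate,
      e'.1.1 = (step e.1 i).1 ∧ e'.1.2 = (step e.1 i).2 ∧
      7 * (if i = 1 ∨ i = 2 then 1 else 0) + e.2 ≤ 4 + e'.2 := by
  decide +kernel

lemma certificate_step {e : (ℕ × ℕ) × ℕ} (he : e ∈ certificate) {i : ℕ}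
    (hi : Admissible e.1 i) :
    ∃ e' ∈ certificate, e'.1 = step e.1 i ∧
      7 * (if i = 1 ∨ i = 2 then 1 else 0) + e.2 ≤ 4 + e'.2 := by
  obtain ⟨-, h⟩ := certificate_spec e he
  rcases (by omega : i ≤ 2 ∨ 3 ≤ i) with hi2 | hi3
  · obtain ⟨e', he', h1, h2, hle⟩ := h i (by simp; omega) hi
    exact ⟨e', he', Prod.ext h1 h2, hle⟩
  · have hstep : step e.1 i = step e.1 0 := by
      simp [step, beq_eq_false_iff_ne.2 (show i ≠ 1 by omega),
        beq_eq_false_iff_ne.2 (show i ≠ 2 by omega)]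
    obtain ⟨e', he', h1, h2, hle⟩ := h 0 (by simp) (by simp [Admissible])
    exact ⟨e', he', hstep ▸ Prod.ext h1 h2,
      by simpa [show i ≠ 1 by omega, show i ≠ 2 by omega] using hle⟩

theorem seven_mul_card_filter_le {a : ℕ → ℕ} (h1 : AvoidsDistances a 1 [2, 5])
    (h2 : AvoidsDistances a 2 [2, 3, 4, 5, 7, 10]) (N : ℕ) :
    7 * #{n ∈ range N | a n = 1 ∨ a n = 2} ≤ 4 * N + 15 := by
  have inv : ∀ N, ∃ e ∈ certificate, e.1 = state a N ∧
      7 * #{n ∈ range N | a n = 1 ∨ a n = 2} ≤ 4 * N + e.2 := by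
    intro N
    induction N with
    | zero => exact ⟨((0, 0), 0), by decide, rfl, by simp⟩
    | succ N ih =>
      obtain ⟨e, he, hes, hle⟩ := ih
      obtain ⟨e', he', hes', hstep⟩ := certificate_step he (hes ▸ admissible_state h1 h2 N)
      refine ⟨e', he', by rw [hes', hes, state_succ], ?_⟩
      rw [card_filter, sum_range_succ, ← card_filter]
      omega
  obtain ⟨e, he, -, hle⟩ := inv N
  have := (certificate_spec e he).1
  omega

end OneTwoAutomaton

theorem exists_fourteen_le_of_avoidsDistances {a : ℕ → ℕ} (h0 : ∀ n, 1 ≤ a n)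
    (h1 : AvoidsDistances a 1 [2, 5]) (h2 : AvoidsDistances a 2 [2, 3, 4, 5, 7, 10])
    (hk : ∀ k, 3 ≤ k → AvoidsDistances a k (List.range' 1 (5 * k - 5))) :
    ∃ n < 462, 14 ≤ a n := by
  by_contra! h13
  have hlow := OneTwoAutomaton.seven_mul_card_filter_le h1 h2 462
  have hhigh : #{n ∈ range 462 | ¬(a n = 1 ∨ a n = 2)} ≤ 189 := calc
    _ = ∑ k ∈ Icc 3 13, #{n ∈ {n ∈ range 462 | ¬(a n = 1 ∨ a n = 2)} | a n = k} :=
        card_eq_sum_card_fiberwise fun n hn ↦ by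
          simp only [coe_filter, mem_range, Set.mem_ofPred_eq, coe_Icc, Set.mem_Icc] at hn ⊢
          have := h0 n
          have := h13 n hn.1
          omega
    _ ≤ ∑ k ∈ Icc 3 13, (462 + (5 * k - 5)) / (5 * k - 5 + 1) := by
        gcongr with k hk3
        refine le_trans (card_le_card fun n ↦ ?_) <|
          card_filter_eq_le_of_avoidsDistances (hk k (mem_Icc.1 hk3).1) 462
        simp only [mem_filter]
        tauto
    _ = 189 := by decide
  have := card_filter_add_card_filter_not (s := range 462) fun n ↦ a n = 1 ∨ a n = 2
  rw [card_range] at this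
  omega

section PackingColoring

variable {p : ℕ} {c : ℤ → ℕ}

lemma IsPackingColoring.avoidsDistances_one (hc : IsPackingColoring (distGraph 2 5) p c) :
    AvoidsDistances (fun n : ℕ ↦ c n) 1 [2, 5] :=
  hc.avoidsDistances fun d hd ↦ by
    simp only [List.mem_cons, List.not_mem_nil, or_false] at hd
    exact ⟨by omega, fun u ↦ SimpleGraph.edist_le_one_iff_adj_or_eq.2
      (.inl (distGraph_adj_add (by omega) (by simpa using hd)))⟩

lemma IsPackingColoring.avoidsDistances_two (hc : IsPackingColoring (distGraph 2 5) p c) :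
    AvoidsDistances (fun n : ℕ ↦ c n) 2 [2, 3, 4, 5, 7, 10] :=
  hc.avoidsDistances fun d hd ↦
    ⟨by simp at hd; omega, fun u ↦ distGraph_two_five_edist_add_le_two hd u⟩

lemma IsPackingColoring.avoidsDistances_of_three_le
    (hc : IsPackingColoring (distGraph 2 5) p c) {k : ℕ} (hk : 3 ≤ k) :
    AvoidsDistances (fun n : ℕ ↦ c n) k (List.range' 1 (5 * k - 5)) :=
  hc.avoidsDistances fun d hd ↦ by
    rw [List.mem_range'_1] at hd
    exact ⟨by omega, fun u ↦ distGraph_two_five_edist_le hk (by simp; omega)⟩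

theorem IsPackingColoring.fourteen_le_of_distGraph_two_five
    (hc : IsPackingColoring (distGraph 2 5) p c) : 14 ≤ p := by
  obtain ⟨n, -, hn⟩ := exists_fourteen_le_of_avoidsDistances (fun n ↦ (hc.1 n).1)
    hc.avoidsDistances_one hc.avoidsDistances_two fun _ ↦ hc.avoidsDistances_of_three_le
  exact hn.trans (hc.1 n).2

end PackingColoring

theorem packing_chromatic_D25 : 14 ≤ packingChromaticNumber (distGraph 2 5) := by
  refine le_sInf ?_
  rintro _ ⟨p, rfl, c, hc⟩
  exact_mod_cast hc.fourteen_le_of_distGraph_two_five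
end

section
/- The packing chromatic number of the distance graph D(4,5) is at least 13. -/
open Finset

section Walks

variable {V : Type*} [AddCommGroup V] {G : SimpleGraph V} {s : V}

lemma SimpleGraph.edist_add_nsmul_le (hs : ∀ v, G.edist v (v + s) ≤ 1) (u : V) (m : ℕ) :
    G.edist u (u + m • s) ≤ m := by
  induction m with
  | zero => simp
  | succ m ih =>
    calc G.edist u (u + (m + 1) • s)
        ≤ G.edist u (u + m • s) + G.edist (u + m • s) (u + m • s + s) := by
          rw [add_smul, one_smul, ← add_assoc]; exact SimpleGraph.edist_triangle
      _ ≤ m + 1 := add_le_add ih (hs _)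

lemma SimpleGraph.edist_add_zsmul_le (hs : ∀ v, G.edist v (v + s) ≤ 1) (u : V) (a : ℤ) :
    G.edist u (u + a • s) ≤ a.natAbs := by
  obtain ⟨m, rfl | rfl⟩ := Int.eq_nat_or_neg a
  · simpa using G.edist_add_nsmul_le hs u m
  · have := G.edist_add_nsmul_le hs (u + -(m : ℤ) • s) m
    rw [neg_smul, natCast_zsmul, neg_add_cancel_right, SimpleGraph.edist_comm] at this
    simpa [neg_smul] using this

end Walks

lemma distGraph_edist_add_le_one (k t : ℕ) (u : ℤ) {s : ℕ} (hs : s = k ∨ s = t) :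
    (distGraph k t).edist u (u + s) ≤ 1 := by
  rw [SimpleGraph.edist_le_one_iff_adj_or_eq]
  by_cases h0 : s = 0
  · simp [h0]
  · exact Or.inl ⟨by omega, by omega⟩

lemma distGraph_edist_le_s15 {k t : ℕ} {u v a b : ℤ} (h : v - u = k * a + t * b) :
    (distGraph k t).edist u v ≤ a.natAbs + b.natAbs := by
  have hk := (distGraph k t).edist_add_zsmul_le (distGraph_edist_add_le_one k t · (.inl rfl))
  have ht := (distGraph k t).edist_add_zsmul_le (distGraph_edist_add_le_one k t · (.inr rfl))
  obtain rfl : v = u + a • (k : ℤ) + b • (t : ℤ) := by simp only [smul_eq_mul]; linarith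
  calc (distGraph k t).edist u (u + a • (k : ℤ) + b • (t : ℤ))
      ≤ (distGraph k t).edist u (u + a • (k : ℤ)) +
        (distGraph k t).edist (u + a • (k : ℤ)) (u + a • (k : ℤ) + b • (t : ℤ)) :=
        SimpleGraph.edist_triangle
    _ ≤ a.natAbs + b.natAbs := add_le_add (hk u a) (ht _ b)

/-- The differences spanned by at most `n` jumps of `D(k,t)`. -/
noncomputable def shortDiffs (k t n : ℕ) : Finset ℕ :=
  ({p ∈ Icc (-(n : ℤ)) n ×ˢ Icc (-(n : ℤ)) n | p.1.natAbs + p.2.natAbs ≤ n}).image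
    fun p => ((k : ℤ) * p.1 + t * p.2).natAbs

lemma mem_shortDiffs {k t n d : ℕ} :
    d ∈ shortDiffs k t n ↔
      ∃ a b : ℤ, ((k : ℤ) * a + t * b).natAbs = d ∧ a.natAbs + b.natAbs ≤ n := by
  simp only [shortDiffs, mem_image, mem_filter, mem_product, mem_Icc, Prod.exists]
  constructor
  · rintro ⟨a, b, ⟨-, hab⟩, rfl⟩
    exact ⟨a, b, rfl, hab⟩
  · rintro ⟨a, b, rfl, hab⟩
    exact ⟨a, b, ⟨⟨⟨by omega, by omega⟩, by omega, by omega⟩, hab⟩, rfl⟩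

lemma shortDiffs_mono (k t : ℕ) {n n' : ℕ} (h : n ≤ n') :
    shortDiffs k t n ⊆ shortDiffs k t n' :=
  fun _ hd ↦ by
    obtain ⟨a, b, hd, hab⟩ := mem_shortDiffs.1 hd
    exact mem_shortDiffs.2 ⟨a, b, hd, hab.trans h⟩

lemma add_mem_shortDiffs_succ {k t n d : ℕ} (hd : d ∈ shortDiffs k t n) :
    d + t ∈ shortDiffs k t (n + 1) := by
  obtain ⟨a, b, rfl, hab⟩ := mem_shortDiffs.1 hd
  rcases le_total 0 ((k : ℤ) * a + t * b) with h | h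
  · refine mem_shortDiffs.2 ⟨a, b + 1, ?_, by omega⟩
    rw [show (k : ℤ) * a + t * (b + 1) = k * a + t * b + t by ring]
    omega
  · refine mem_shortDiffs.2 ⟨-a, -b + 1, ?_, by omega⟩
    rw [show (k : ℤ) * -a + t * (-b + 1) = -(k * a + t * b) + t by ring]
    omega

lemma IsPackingColoring.natAbs_sub_notMem_shortDiffs {k t p : ℕ} {c : ℤ → ℕ}
    (hc : IsPackingColoring (distGraph k t) p c) {x y : ℤ} (hxy : x ≠ y) (hcol : c x = c y) :
    (y - x).natAbs ∉ shortDiffs k t (c x) := by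
  intro hd
  obtain ⟨a, b, hab, hn⟩ := mem_shortDiffs.1 hd
  have hdist : (distGraph k t).edist x y ≤ c x := by
    rcases Int.natAbs_eq_natAbs_iff.1 hab with h | h
    · exact (distGraph_edist_le_s15 h.symm).trans (by exact_mod_cast hn)
    · refine (distGraph_edist_le_s15 (a := -a) (b := -b) (by linarith)).trans ?_
      simp only [Int.natAbs_neg]
      exact_mod_cast hn
  exact (hc.2 x y hxy hcol).not_ge hdist

def AvoidsDiffs (D : Finset ℕ) (P : ℕ → Prop) : Prop :=
  ∀ m n, P m → P n → m < n → n - m ∉ D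

lemma IsPackingColoring.avoidsDiffs {k t p : ℕ} {c : ℤ → ℕ}
    (hc : IsPackingColoring (distGraph k t) p c) (j : ℕ) :
    AvoidsDiffs (shortDiffs k t j) fun n : ℕ ↦ c n = j := by
  intro m n hm hn hmn
  have := hc.natAbs_sub_notMem_shortDiffs (x := m) (y := n) (by omega) (hm.trans hn.symm)
  rwa [hm, show ((n : ℤ) - m).natAbs = n - m by omega] at this

/-- `ChainFrom D w n xs`: the list `xs` (newest point first) can be extended by `n` more points
in `[0, w)`, each exceeding all earlier points by a difference outside `D`. -/
def ChainFrom (D : Finset ℕ) (w : ℕ) : ℕ → List ℕ → Prop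
  | 0, _ => True
  | n + 1, xs => ∃ y < w, (∀ x ∈ xs, x < y ∧ y - x ∉ D) ∧ ChainFrom D w n (y :: xs)

instance decidableChainFrom (D : Finset ℕ) (w : ℕ) : ∀ n xs, Decidable (ChainFrom D w n xs)
  | 0, _ => isTrue trivial
  | n + 1, xs =>
    haveI := fun ys ↦ decidableChainFrom D w n ys
    inferInstanceAs
      (Decidable (∃ y < w, (∀ x ∈ xs, x < y ∧ y - x ∉ D) ∧ ChainFrom D w n (y :: xs)))

lemma chainFrom_card_of_avoidsDiffs {D : Finset ℕ} {w : ℕ} (T : Finset ℕ) (hT : T ⊆ range w)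
    (hD : AvoidsDiffs D (· ∈ T)) (xs : List ℕ)
    (hxs : ∀ x ∈ xs, ∀ y ∈ T, x < y ∧ y - x ∉ D) : ChainFrom D w #T xs := by
  induction T using Finset.induction_on_min generalizing xs with
  | empty => trivial
  | insert a T haT ih =>
    rw [card_insert_of_notMem fun h ↦ lt_irrefl a (haT a h)]
    refine ⟨a, mem_range.1 (hT (mem_insert_self a T)),
      fun x hx ↦ hxs x hx a (mem_insert_self a T),
      ih ((subset_insert a T).trans hT) (fun m n hm hn ↦ hD m n (mem_insert_of_mem hm)
        (mem_insert_of_mem hn)) _ ?_⟩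
    rintro x (_ | ⟨_, hx⟩) y hy
    · exact ⟨haT y hy, hD a y (mem_insert_self a T) (mem_insert_of_mem hy) (haT y hy)⟩
    · exact hxs x hx y (mem_insert_of_mem hy)

namespace AvoidsDiffs

variable {D : Finset ℕ} {P : ℕ → Prop}

lemma comp_add (hP : AvoidsDiffs D P) (m : ℕ) : AvoidsDiffs D fun n ↦ P (m + n) :=
  fun n n' hn hn' hnn' ↦ by simpa [Nat.add_sub_add_left] using hP _ _ hn hn' (by omega)

lemma chainFrom_zero {w : ℕ} (hP : AvoidsDiffs D P) (h0 : P 0) {T : Finset ℕ}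
    (hT : ∀ n ∈ T, n ∈ Ico 1 w ∧ P n) : ChainFrom D w #T [0] := by
  refine chainFrom_card_of_avoidsDiffs T (fun n hn ↦ ?_) (fun n n' hn hn' ↦ ?_) [0] ?_
  · exact mem_range.2 (mem_Ico.1 (hT n hn).1).2
  · exact hP n n' (hT n hn).2 (hT n' hn').2
  · rintro x (_ | ⟨_, ⟨⟩⟩) y hy
    have hy1 := (mem_Ico.1 (hT y hy).1).1
    exact ⟨hy1, by simpa using hP 0 y h0 (hT y hy).2 hy1⟩

lemma card_filter_Ico_le [DecidablePred P] (hP : AvoidsDiffs D P) {w s : ℕ}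
    (hD : ¬ ChainFrom D w s [0]) (a : ℕ) : #{n ∈ Ico a (a + w) | P n} ≤ s := by
  by_contra! hs
  set T := {n ∈ Ico a (a + w) | P n}
  have hne : T.Nonempty := card_pos.1 (by omega)
  set m := T.min' hne
  obtain ⟨hm, hPm⟩ := mem_filter.1 (T.min'_mem hne)
  have hsub : T ⊆ insert m ({n ∈ Ico 1 w | P (m + n)}.image (m + ·)) := by
    intro n hn
    obtain ⟨hn', hPn⟩ := mem_filter.1 hn
    rcases (T.min'_le n hn).eq_or_lt with h | h
    · exact h ▸ mem_insert_self _ _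
    · refine mem_insert_of_mem (mem_image.2 ⟨n - m, mem_filter.2 ⟨?_, ?_⟩, by omega⟩)
      · simp only [mem_Ico] at hm hn' ⊢; omega
      · rwa [Nat.add_sub_cancel' h.le]
  have hcard : s ≤ #{n ∈ Ico 1 w | P (m + n)} := by
    have := (card_le_card hsub).trans
      ((card_insert_le _ _).trans (Nat.add_le_add_right card_image_le 1))
    omega
  obtain ⟨U, hU, rfl⟩ := exists_subset_card_eq hcard
  exact hD ((hP.comp_add m).chainFrom_zero (by simpa using hPm) fun n hn ↦ mem_filter.1 (hU hn))

end AvoidsDiffs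

section Density

variable {P : ℕ → Prop} [DecidablePred P] {w s : ℕ}

lemma card_filter_range_mul_le (h : ∀ a, #{n ∈ Ico a (a + w) | P n} ≤ s) (N : ℕ) :
    #{n ∈ range (N * w) | P n} ≤ N * s := by
  induction N with
  | zero => simp
  | succ N ih =>
    rw [range_eq_Ico, add_one_mul, ← Ico_union_Ico_eq_Ico (Nat.zero_le (N * w)) (by omega),
      filter_union, ← range_eq_Ico, add_one_mul]
    exact (card_union_le _ _).trans (add_le_add ih (h _))

lemma card_filter_range_le_ceilDiv (hw : 0 < w) (h : ∀ a, #{n ∈ Ico a (a + w) | P n} ≤ s)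
    (L : ℕ) : #{n ∈ range L | P n} ≤ L ⌈/⌉ w * s := by
  have hL : L ≤ L ⌈/⌉ w * w := by simpa [mul_comm] using le_smul_ceilDiv (b := L) hw
  exact (card_le_card (filter_subset_filter _ (range_subset_range.2 hL))).trans
    (card_filter_range_mul_le h _)

end Density

lemma Icc_subset_shortDiffs_four_five {j : ℕ} (hj : 4 ≤ j) :
    Icc 1 (5 * j) ⊆ shortDiffs 4 5 j := by
  induction j, hj using Nat.le_induction with
  | base => decide
  | succ j hj ih =>
    intro d hd
    rw [mem_Icc] at hd
    by_cases hdj : d ≤ 5 * j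
    · exact shortDiffs_mono 4 5 j.le_succ (ih (mem_Icc.2 ⟨hd.1, hdj⟩))
    · obtain ⟨e, rfl⟩ : ∃ e, d = e + 5 := ⟨d - 5, by omega⟩
      exact add_mem_shortDiffs_succ (ih (mem_Icc.2 ⟨by omega, by omega⟩))

lemma not_chainFrom_one_of_Ico_subset {D : Finset ℕ} {w : ℕ} (h : Ico 1 w ⊆ D) :
    ¬ ChainFrom D w 1 [0] := by
  rintro ⟨y, hy, hxs, -⟩
  obtain ⟨hy0, hyD⟩ := hxs 0 (List.mem_singleton_self 0)
  exact hyD (h (mem_Ico.2 ⟨hy0, hy⟩))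

def windowLen : ℕ → ℕ
  | 1 => 9
  | 2 => 31
  | 3 => 18
  | j => 5 * j + 1

def windowCap : ℕ → ℕ
  | 1 => 4
  | 2 => 6
  | 3 => 2
  | _ => 1

lemma IsPackingColoring.card_window_le {p : ℕ} {c : ℤ → ℕ}
    (hc : IsPackingColoring (distGraph 4 5) p c) (j a : ℕ) :
    #{n ∈ Ico a (a + windowLen j) | c (n : ℕ) = j} ≤ windowCap j := by
  match j with
  | 0 => exact (card_filter_le _ _).trans (by simp [windowLen, windowCap])
  | 1 => exact (hc.avoidsDiffs 1).card_filter_Ico_le (by decide) a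
  | 2 => exact (hc.avoidsDiffs 2).card_filter_Ico_le (by decide +kernel) a
  | 3 => exact (hc.avoidsDiffs 3).card_filter_Ico_le (by decide) a
  | j + 4 =>
    refine (hc.avoidsDiffs (j + 4)).card_filter_Ico_le (not_chainFrom_one_of_Ico_subset ?_) a
    intro d hd
    exact Icc_subset_shortDiffs_four_five (by omega) (by simp [windowLen] at hd ⊢; omega)

lemma IsPackingColoring.card_colorClass_le {p : ℕ} {c : ℤ → ℕ}
    (hc : IsPackingColoring (distGraph 4 5) p c) (j L : ℕ) :
    #{n ∈ range L | c (n : ℕ) = j} ≤ L ⌈/⌉ windowLen j * windowCap j :=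
  card_filter_range_le_ceilDiv (by unfold windowLen; split <;> omega) (hc.card_window_le j) L

theorem packing_chromatic_D45 : 13 ≤ packingChromaticNumber (distGraph 4 5) := by
  refine le_sInf ?_
  rintro _ ⟨p, rfl, c, hc⟩
  by_contra! hlt
  have hp : p ≤ 12 := by
    have : p < 13 := by exact_mod_cast hlt
    omega
  have hcolors : ∀ n ∈ range 5580, c n ∈ Icc 1 12 := fun n _ ↦
    mem_Icc.2 ⟨(hc.1 n).1, (hc.1 n).2.trans hp⟩
  have : 5580 ≤ 5557 := calc
    5580 = ∑ j ∈ Icc 1 12, #{n ∈ range 5580 | c (n : ℕ) = j} := by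
      rw [← card_eq_sum_card_fiberwise hcolors, card_range]
    _ ≤ ∑ j ∈ Icc 1 12, 5580 ⌈/⌉ windowLen j * windowCap j :=
      sum_le_sum fun j _ ↦ hc.card_colorClass_le j 5580
    _ = 5557 := by decide
  omega
end

section
/- For every integer i ≥ 5, any two distinct vertices of the subgraph D_{7i−13}(2,7) of the distance graph D(2,7) induced by the vertex set {1, 2, …, 7i−13} are at distance at most i in D_{7i−13}(2,7); that is, no pair of vertices of D_{7i−13}(2,7) is at distance greater than i. -/
/-!
Write `b - a = 7q + r` with `0 ≤ r < 7`. For even `r` go up by `q` sevens and then by `r / 2`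
twos; for `r = 1` trade one seven for four twos. For `r = 3, 5` overshoot by one seven and come
back by twos, but take that extra seven last (after going down), so that the route never leaves
the segment. Since `b - a ≤ 7i - 14`, each count is at most `i`. Every leg is a run of equal
steps between two points of the segment, hence lies inside it.
-/

namespace distGraph

variable {k t c : ℕ} {S : Set ℤ}

lemma adj_or_eq_add (hc : c = k ∨ c = t) (a : ℤ) :
    (distGraph k t).Adj a (a + c) ∨ a = a + c := by
  rcases eq_or_ne c 0 with rfl | hc0
  · simp
  · refine .inl ⟨by omega, ?_⟩
    rwa [sub_add_cancel_left, Int.natAbs_neg, Int.natAbs_natCast]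

lemma induce_edist_le_of_eq_add_mul (hS : S.OrdConnected) (hc : c = k ∨ c = t) {x y : S}
    {n : ℕ} (h : (y : ℤ) = x + c * n) : ((distGraph k t).induce S).edist x y ≤ n := by
  induction n generalizing y with
  | zero =>
    obtain rfl : y = x := Subtype.ext (by simpa using h)
    simp
  | succ n ih =>
    have hmid : (x : ℤ) + c * n ∈ S :=
      hS.out x.2 y.2 ⟨le_add_of_nonneg_right (by positivity), by rw [h]; gcongr; omega⟩
    have hstep : ((distGraph k t).induce S).edist ⟨x + c * n, hmid⟩ y ≤ 1 := by
      rw [SimpleGraph.edist_le_one_iff_adj_or_eq, SimpleGraph.induce_adj, Subtype.ext_iff, h]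
      convert adj_or_eq_add hc ((x : ℤ) + c * n) using 2 <;> push_cast <;> ring
    calc _ ≤ _ := SimpleGraph.edist_triangle
      _ ≤ (n : ℕ∞) + 1 := add_le_add (ih rfl) hstep
      _ = _ := by norm_cast

lemma induce_edist_le_natAbs (hS : S.OrdConnected) (hc : c = k ∨ c = t) {x y : S} {m : ℤ}
    (h : (y : ℤ) = x + c * m) : ((distGraph k t).induce S).edist x y ≤ m.natAbs := by
  obtain ⟨n, rfl | rfl⟩ := Int.eq_nat_or_neg m
  · exact induce_edist_le_of_eq_add_mul hS hc h
  · rw [SimpleGraph.edist_comm, Int.natAbs_neg, Int.natAbs_natCast]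
    exact induce_edist_le_of_eq_add_mul hS hc (by rw [h]; ring)

lemma induce_edist_le_three_legs (hS : S.OrdConnected) {c₁ c₂ c₃ : ℕ} (hc₁ : c₁ = k ∨ c₁ = t)
    (hc₂ : c₂ = k ∨ c₂ = t) (hc₃ : c₃ = k ∨ c₃ = t) {x y : S} {p₁ p₂ p₃ : ℤ}
    (h₁ : (x : ℤ) + c₁ * p₁ ∈ S) (h₂ : (x : ℤ) + c₁ * p₁ + c₂ * p₂ ∈ S)
    (h : (y : ℤ) = x + c₁ * p₁ + c₂ * p₂ + c₃ * p₃) :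
    ((distGraph k t).induce S).edist x y ≤ p₁.natAbs + p₂.natAbs + p₃.natAbs :=
  calc _ ≤ _ + _ + _ := SimpleGraph.edist_triangle.trans
        (add_le_add_left (SimpleGraph.edist_triangle (v := ⟨_, h₁⟩)) _)
    _ ≤ _ := add_le_add (add_le_add (induce_edist_le_natAbs hS hc₁ rfl)
        (induce_edist_le_natAbs hS hc₂ (y := ⟨_, h₂⟩) rfl)) (induce_edist_le_natAbs hS hc₃ h)
    _ = _ := by norm_cast

end distGraph

lemma exists_route_seven_two_seven {i : ℕ} (hi : 5 ≤ i) {a b : ℤ} (ha : 1 ≤ a) (hab : a < b)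
    (hb : b ≤ 7 * i - 13) :
    ∃ p₁ s p₂ : ℤ, b = a + 7 * p₁ + 2 * s + 7 * p₂ ∧
      (1 ≤ a + 7 * p₁ ∧ a + 7 * p₁ ≤ 7 * i - 13) ∧
      (1 ≤ a + 7 * p₁ + 2 * s ∧ a + 7 * p₁ + 2 * s ≤ 7 * i - 13) ∧
      p₁.natAbs + s.natAbs + p₂.natAbs ≤ i := by
  by_cases heven : (b - a) % 7 % 2 = 0
  · exact ⟨(b - a) / 7, (b - a) % 7 / 2, 0, by omega⟩
  by_cases hshort : b - a < 7
  · by_cases hup : a + 7 ≤ 7 * i - 13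
    · exact ⟨1, (b - a - 7) / 2, 0, by omega⟩
    · exact ⟨0, (b - a - 7) / 2, 1, by omega⟩
  by_cases hone : (b - a) % 7 = 1
  · exact ⟨(b - a) / 7 - 1, 4, 0, by omega⟩
  · exact ⟨(b - a) / 7, ((b - a) % 7 - 7) / 2, 1, by omega⟩

theorem D27_segment_diameter (i : ℕ) (hi : 5 ≤ i) :
    ∀ u v : ({z : ℤ | 1 ≤ z ∧ z ≤ 7 * (i : ℤ) - 13} : Set ℤ), u ≠ v →
      (SimpleGraph.induce {z : ℤ | 1 ≤ z ∧ z ≤ 7 * (i : ℤ) - 13} (distGraph 2 7)).edist u v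
        ≤ (i : ℕ∞) := by
  intro u v huv
  wlog hlt : (u : ℤ) < v generalizing u v
  · rw [SimpleGraph.edist_comm]
    exact this v u huv.symm (lt_of_le_of_ne (not_lt.1 hlt) (Subtype.coe_ne_coe.2 huv.symm))
  obtain ⟨p₁, s, p₂, hv, h₁, h₂, hlen⟩ := exists_route_seven_two_seven hi u.2.1 hlt v.2.2
  calc _ ≤ _ := distGraph.induce_edist_le_three_legs Set.ordConnected_Icc (.inr rfl) (.inl rfl)
        (.inr rfl) (c₁ := 7) (c₂ := 2) (c₃ := 7) h₁ h₂ hv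
    _ ≤ _ := by exact_mod_cast hlen
end
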